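/- arXiv:2009.03783 — 7 statements merged into one kernel-verified Lean document; each statement's English description precedes it below -/
import Mathlib

section
/- Let N ≥ 1 and Q ≥ 1 be integers and let ε ∈ (0, 1/2]. Let 𝒱 be a finite nonempty family of value functions v : Finset (Fin N) → ℝ whose robust core C₀ = ⋂_{v∈𝒱} C(v) is nonempty. Let 𝒯 be a finite family of maps T : X → X, each nonexpansive with respect to ‖·‖_{2,2}, such that ⋂_{T∈𝒯} fix(T) = C₀^N := {x ∈ X | ∀ i, x_i ∈ C₀}. Let 𝒲 be a finite family of N×N doubly stochastic matrices with strictly positive diagonal entries. Let (T^k)_{k∈ℕ} be a sequence with T^k ∈ 𝒯 such that for every n ∈ ℕ, {T^n, T^{n+1}, …, T^{n+Q}} = 𝒯, and let (W^k)_{k∈ℕ} be a sequence with W^k ∈ 𝒲 such that for every k ∈ ℕ the edge set ⋃_{l=1}^{Q} {(i,j) | W^{k+l}_{ij} > 0} is strongly connected on Fin N. Let (α_k)_{k∈ℕ} satisfy α_k ∈ [ε, 1−ε] for all k. Then for every initial point x⁰ ∈ X, the sequence generated by x^{k+1} = (1−α_k) x^k + α_k T^k(𝑾^k x^k) converges to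 some x̄ ∈ 𝒜 ∩ C₀^N, i.e., a point with all components equal to a common payoff vector lying in the robust core C₀. -/
open scoped BigOperators

noncomputable section

/-- The stacked space `X = Fin N → EuclideanSpace ℝ (Fin N)` with the ℓ²-product norm. -/
abbrev XSp (N : ℕ) := PiLp 2 (fun _ : Fin N => EuclideanSpace ℝ (Fin N))

/-- The core of a TU coalitional game with value function `v`. -/
def core {N : ℕ} (v : Finset (Fin N) → ℝ) : Set (EuclideanSpace ℝ (Fin N)) :=
  {x | ∑ i, x i = v Finset.univ ∧
    ∀ S : Finset (Fin N), S.Nonempty → ∑ i ∈ S, x i ≥ v S}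

/-- A matrix is doubly stochastic: nonnegative entries, rows and columns sum to 1. -/
def DoublyStochastic {N : ℕ} (W : Matrix (Fin N) (Fin N) ℝ) : Prop :=
  (∀ i j, 0 ≤ W i j) ∧ (∀ i, ∑ j, W i j = 1) ∧ (∀ j, ∑ i, W i j = 1)

/-- The averaging map `(𝑾 x)_i = ∑ j, W i j • x j` (Kronecker product `W ⊗ I`). -/
def avgMap {N n : ℕ} (W : Matrix (Fin N) (Fin N) ℝ)
    (x : PiLp 2 fun _ : Fin N => EuclideanSpace ℝ (Fin n)) :
    PiLp 2 fun _ : Fin N => EuclideanSpace ℝ (Fin n) :=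
  WithLp.toLp 2 (fun i => ∑ j, W i j • x j)

/-- An edge set on `Fin N` is strongly connected. -/
def StronglyConnected {N : ℕ} (E : Set (Fin N × Fin N)) : Prop :=
  ∀ i j : Fin N, Relation.ReflTransGen (fun a b => (a, b) ∈ E) i j

/-- A map is nonexpansive (1-Lipschitz). -/
def Nonexpansive {E : Type*} [NormedAddCommGroup E] (T : E → E) : Prop :=
  ∀ x y, ‖T x - T y‖ ≤ ‖x - y‖

/-- A continuous map `M` is a paracontraction if `‖M x - y‖ < ‖x - y‖` whenever
`x` is not a fixed point of `M` and `y` is a fixed point of `M`. -/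
def Paracontraction {E : Type*} [NormedAddCommGroup E] (M : E → E) : Prop :=
  Continuous M ∧ ∀ x y, M x ≠ x → M y = y → ‖M x - y‖ < ‖x - y‖

/-!
Any consensus point `y` whose blocks lie in the robust core is fixed by every `T k ∘ 𝑾 k`.
The Krasnosel'skii–Mann identity then shows that `‖x k - y‖²` drops at each step by at least
`ε² ‖x k - T k (𝑾 k x k)‖² + ε (‖x k - y‖² - ‖𝑾 k (x k - y)‖²)`, so both defects tend to `0`.
For a doubly stochastic `W`, `‖z‖² - ‖𝑾 z‖² = ½ ∑ᵢ ∑ₐ ∑_b Wᵢₐ Wᵢ_b ‖zₐ - z_b‖²`, which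
(with positive diagonal) controls `‖zₐ - z_b‖²` along every edge `Wₐ_b > 0`.
Since operators and matrices range over finite sets, some subsequence of iterates converges to
a point `x̄` while the window of the next `Q + 1` operators and matrices stays frozen. In the
limit `x̄` is equalized along every edge of the strongly connected window, hence is a consensus
point, and it is fixed by every operator of the window, hence by all of `𝒯`. So `x̄` is itself
a point to which the iterates are Fejér monotone, and the whole sequence converges to it.
-/

open Filter Topology
open scoped RealInnerProductSpace

theorem Nonexpansive.continuous {E : Type*} [NormedAddCommGroup E] {T : E → E}
    (hT : Nonexpansive T) : Continuous T :=
  (LipschitzWith.of_dist_le_mul (K := 1) fun u v => by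
    simpa only [dist_eq_norm, NNReal.coe_one, one_mul] using hT u v).continuous

theorem norm_sum_smul_sq_eq {ι F : Type*} [Fintype ι] [NormedAddCommGroup F]
    [InnerProductSpace ℝ F] {w : ι → ℝ} (hw : ∑ i, w i = 1) (v : ι → F) :
    ‖∑ i, w i • v i‖ ^ 2
      = ∑ i, w i * ‖v i‖ ^ 2 - (∑ i, ∑ j, w i * w j * ‖v i - v j‖ ^ 2) / 2 := by
  have hinner : ‖∑ i, w i • v i‖ ^ 2 = ∑ i, ∑ j, w i * w j * ⟪v i, v j⟫ := by
    simp only [← real_inner_self_eq_norm_sq, sum_inner, inner_sum, real_inner_smul_left,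
      real_inner_smul_right]
    rw [Finset.sum_comm]
    simp only [mul_left_comm, mul_assoc]
  have hdiff : ∑ i, ∑ j, w i * w j * ‖v i - v j‖ ^ 2
      = 2 * ∑ i, w i * ‖v i‖ ^ 2 - 2 * ∑ i, ∑ j, w i * w j * ⟪v i, v j⟫ := by
    simp only [norm_sub_sq_real, mul_add, mul_sub, Finset.sum_add_distrib, Finset.sum_sub_distrib]
    simp only [mul_assoc, ← Finset.mul_sum, ← Finset.sum_mul, hw, one_mul,
      mul_left_comm _ (2 : ℝ)]
    ring
  rw [hinner, hdiff]
  ring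

theorem norm_convexComb_sub_sq {F : Type*} [NormedAddCommGroup F] [InnerProductSpace ℝ F]
    (a : ℝ) (u s y : F) :
    ‖(1 - a) • u + a • s - y‖ ^ 2
      = (1 - a) * ‖u - y‖ ^ 2 + a * ‖s - y‖ ^ 2 - a * (1 - a) * ‖u - s‖ ^ 2 := by
  have h₁ : (1 - a) • u + a • s - y = (u - y) - a • (u - s) := by module
  have h₂ : s - y = (u - y) - (u - s) := by abel
  rw [h₁, h₂, norm_sub_sq_real (u - y) (a • (u - s)), norm_sub_sq_real (u - y) (u - s),
    norm_smul, real_inner_smul_right, mul_pow, Real.norm_eq_abs, sq_abs]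
  ring

theorem norm_krasnoselskii_sub_sq_add_le {F : Type*} [NormedAddCommGroup F]
    [InnerProductSpace ℝ F] {U : F → F} (hU : Nonexpansive U) {y : F} (hy : U y = y) {a : ℝ}
    (ha : 0 ≤ a) (u w : F) :
    ‖(1 - a) • u + a • U w - y‖ ^ 2 + a * (1 - a) * ‖u - U w‖ ^ 2
        + a * (‖u - y‖ ^ 2 - ‖w - y‖ ^ 2) ≤ ‖u - y‖ ^ 2 := by
  have hUw : ‖U w - y‖ ^ 2 ≤ ‖w - y‖ ^ 2 := by
    gcongr
    simpa only [hy] using hU w y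
  rw [norm_convexComb_sub_sq]
  nlinarith

theorem tendsto_zero_of_succ_add_le {D c : ℕ → ℝ} (hD : ∀ k, D (k + 1) + c k ≤ D k)
    (hD₀ : ∀ k, 0 ≤ D k) (hc : ∀ k, 0 ≤ c k) : Tendsto c atTop (𝓝 0) := by
  refine (summable_of_sum_range_le hc (c := D 0) fun n => ?_).tendsto_atTop_zero
  have htele : ∀ n, ∑ k ∈ Finset.range n, c k ≤ D 0 - D n := by
    intro n
    induction n with
    | zero => simp
    | succ n ih => rw [Finset.sum_range_succ]; linarith [hD n]
  linarith [htele n, hD₀ n]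

theorem tendsto_comp_add_of_tendsto_succ_sub {E : Type*} [SeminormedAddCommGroup E]
    {x : ℕ → E} (hx : Tendsto (fun k => x (k + 1) - x k) atTop (𝓝 0)) {σ : ℕ → ℕ}
    (hσ : Tendsto σ atTop atTop) {p : E} (hp : Tendsto (x ∘ σ) atTop (𝓝 p)) (l : ℕ) :
    Tendsto (fun j => x (σ j + l)) atTop (𝓝 p) := by
  induction l with
  | zero => exact hp
  | succ l ih =>
    have hσl : Tendsto (fun j => σ j + l) atTop atTop :=
      tendsto_atTop_mono (fun j => Nat.le_add_right _ _) hσ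
    simpa [add_assoc] using (hx.comp hσl).add ih

theorem tendsto_of_antitone_norm_sub {E : Type*} [SeminormedAddCommGroup E] {x : ℕ → E} {p : E}
    (hx : Antitone fun k => ‖x k - p‖) {σ : ℕ → ℕ} (hσ : Tendsto σ atTop atTop)
    (hp : Tendsto (x ∘ σ) atTop (𝓝 p)) : Tendsto x atTop (𝓝 p) := by
  rw [tendsto_iff_norm_sub_tendsto_zero] at hp ⊢
  have hinf := tendsto_atTop_ciInf hx ⟨0, by rintro _ ⟨k, rfl⟩; exact norm_nonneg _⟩
  rwa [tendsto_nhds_unique (hinf.comp hσ) hp] at hinf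

theorem exists_strictMono_tendsto_of_finite {X β : Type*} [PseudoMetricSpace X] [ProperSpace X]
    {x : ℕ → X} {s : Set X} (hs : Bornology.IsBounded s) (hx : ∀ k, x k ∈ s) {g : ℕ → β}
    {t : Set β} (ht : t.Finite) (hg : ∀ k, g k ∈ t) :
    ∃ σ : ℕ → ℕ, StrictMono σ ∧ (∀ j, g (σ j) = g (σ 0)) ∧ ∃ p, Tendsto (x ∘ σ) atTop (𝓝 p) := by
  obtain ⟨v, -, hv⟩ := (ht.frequently_exists (p := fun v k => g k = v)).mp
    (Frequently.of_forall (f := atTop) fun k => ⟨g k, hg k, rfl⟩)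
  obtain ⟨ψ, hψ, hgψ⟩ := extraction_of_frequently_atTop hv
  obtain ⟨p, -, φ, hφ, hp⟩ := tendsto_subseq_of_bounded hs fun j => hx (ψ j)
  exact ⟨ψ ∘ φ, hψ.comp hφ, fun j => (hgψ _).trans (hgψ _).symm, p, hp⟩

theorem eq_of_stronglyConnected {N : ℕ} {β : Type*} {E : Set (Fin N × Fin N)}
    (hE : StronglyConnected E) {f : Fin N → β} (hf : ∀ p ∈ E, f p.1 = f p.2) (a b : Fin N) :
    f a = f b := by
  induction hE a b with
  | refl => rfl
  | tail _ hedge ih => exact ih.trans (hf _ hedge)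

section Averaging

variable {N n : ℕ}

local notation "Y" => PiLp 2 fun _ : Fin N => EuclideanSpace ℝ (Fin n)

theorem avgMap_apply (W : Matrix (Fin N) (Fin N) ℝ) (z : Y) (i : Fin N) :
    avgMap W z i = ∑ j, W i j • z j := rfl

theorem avgMap_sub (W : Matrix (Fin N) (Fin N) ℝ) (u v : Y) :
    avgMap W (u - v) = avgMap W u - avgMap W v := by
  ext1 i
  simp only [avgMap_apply, PiLp.sub_apply, smul_sub, Finset.sum_sub_distrib]

@[fun_prop]
theorem continuous_avgMap (W : Matrix (Fin N) (Fin N) ℝ) : Continuous (avgMap W : Y → Y) := by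
  unfold avgMap
  fun_prop

theorem avgMap_eq_self {W : Matrix (Fin N) (Fin N) ℝ} (hrow : ∀ i, ∑ j, W i j = 1) {z : Y}
    (hz : ∀ i j, z i = z j) : avgMap W z = z := by
  ext1 i
  simp only [avgMap_apply, hz _ i, ← Finset.sum_smul, hrow, one_smul]

theorem two_mul_norm_sq_sub_norm_avgMap_sq {W : Matrix (Fin N) (Fin N) ℝ}
    (hrow : ∀ i, ∑ j, W i j = 1) (hcol : ∀ j, ∑ i, W i j = 1) (z : Y) :
    2 * (‖z‖ ^ 2 - ‖avgMap W z‖ ^ 2) = ∑ i, ∑ a, ∑ b, W i a * W i b * ‖z a - z b‖ ^ 2 := by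
  have hmass : ∑ i, ∑ j, W i j * ‖z j‖ ^ 2 = ‖z‖ ^ 2 := by
    rw [Finset.sum_comm, PiLp.norm_sq_eq_of_L2]
    simp only [← Finset.sum_mul, hcol, one_mul]
  simp only [PiLp.norm_sq_eq_of_L2 _ (avgMap W z), avgMap_apply, norm_sum_smul_sq_eq (hrow _),
    Finset.sum_sub_distrib, hmass, ← Finset.sum_div]
  ring

theorem norm_avgMap_le {W : Matrix (Fin N) (Fin N) ℝ} (hW : DoublyStochastic W) (z : Y) :
    ‖avgMap W z‖ ≤ ‖z‖ := by
  obtain ⟨hnn, hrow, hcol⟩ := hW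
  have hdis := two_mul_norm_sq_sub_norm_avgMap_sq hrow hcol z
  have : 0 ≤ ∑ i, ∑ a, ∑ b, W i a * W i b * ‖z a - z b‖ ^ 2 :=
    Finset.sum_nonneg fun i _ => Finset.sum_nonneg fun a _ => Finset.sum_nonneg fun b _ =>
      mul_nonneg (mul_nonneg (hnn i a) (hnn i b)) (sq_nonneg _)
  exact (pow_le_pow_iff_left₀ (norm_nonneg _) (norm_nonneg _) two_ne_zero).mp (by linarith)

theorem norm_sq_sub_norm_avgMap_sq_nonneg {W : Matrix (Fin N) (Fin N) ℝ}
    (hW : DoublyStochastic W) (z : Y) : 0 ≤ ‖z‖ ^ 2 - ‖avgMap W z‖ ^ 2 :=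
  sub_nonneg.mpr (pow_le_pow_left₀ (norm_nonneg _) (norm_avgMap_le hW z) 2)

theorem mul_norm_sub_sq_le_norm_sq_sub_norm_avgMap_sq {W : Matrix (Fin N) (Fin N) ℝ}
    (hW : DoublyStochastic W) (z : Y) (i a b : Fin N) :
    W i a * W i b * ‖z a - z b‖ ^ 2 ≤ 2 * (‖z‖ ^ 2 - ‖avgMap W z‖ ^ 2) := by
  obtain ⟨hnn, hrow, hcol⟩ := hW
  have hterm : ∀ i a b, 0 ≤ W i a * W i b * ‖z a - z b‖ ^ 2 := fun i a b =>
    mul_nonneg (mul_nonneg (hnn i a) (hnn i b)) (sq_nonneg _)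
  rw [two_mul_norm_sq_sub_norm_avgMap_sq hrow hcol]
  calc W i a * W i b * ‖z a - z b‖ ^ 2
      ≤ ∑ b, W i a * W i b * ‖z a - z b‖ ^ 2 :=
        Finset.single_le_sum (fun b _ => hterm i a b) (Finset.mem_univ b)
    _ ≤ ∑ a, ∑ b, W i a * W i b * ‖z a - z b‖ ^ 2 :=
        Finset.single_le_sum (f := fun a => ∑ b, W i a * W i b * ‖z a - z b‖ ^ 2)
          (fun a _ => Finset.sum_nonneg fun b _ => hterm i a b) (Finset.mem_univ a)
    _ ≤ ∑ i, ∑ a, ∑ b, W i a * W i b * ‖z a - z b‖ ^ 2 :=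
        Finset.single_le_sum (f := fun i => ∑ a, ∑ b, W i a * W i b * ‖z a - z b‖ ^ 2)
          (fun i _ => Finset.sum_nonneg fun a _ => Finset.sum_nonneg fun b _ => hterm i a b)
          (Finset.mem_univ i)

theorem eq_of_norm_avgMap_eq {W : Matrix (Fin N) (Fin N) ℝ} (hW : DoublyStochastic W)
    {a b : Fin N} (haa : 0 < W a a) (hab : 0 < W a b) {z : Y} (h : ‖avgMap W z‖ = ‖z‖) :
    z a = z b := by
  have hle := mul_norm_sub_sq_le_norm_sq_sub_norm_avgMap_sq hW z a a b
  rw [h, sub_self, mul_zero] at hle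
  have hsq : ‖z a - z b‖ ^ 2 = 0 :=
    le_antisymm (nonpos_of_mul_nonpos_right hle (mul_pos haa hab)) (sq_nonneg _)
  simpa [sub_eq_zero] using hsq

end Averaging

section Iteration

variable {N n : ℕ}

local notation "Y" => PiLp 2 fun _ : Fin N => EuclideanSpace ℝ (Fin n)

variable {T : ℕ → (PiLp 2 fun _ : Fin N => EuclideanSpace ℝ (Fin n)) →
    PiLp 2 fun _ : Fin N => EuclideanSpace ℝ (Fin n)}
  {W : ℕ → Matrix (Fin N) (Fin N) ℝ} {α : ℕ → ℝ}
  {x : ℕ → PiLp 2 fun _ : Fin N => EuclideanSpace ℝ (Fin n)}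
  {y : PiLp 2 fun _ : Fin N => EuclideanSpace ℝ (Fin n)}

theorem iterate_norm_sub_sq_add_le {k : ℕ} (hT : Nonexpansive (T k))
    (hW : DoublyStochastic (W k)) (hα : 0 ≤ α k)
    (hx : x (k + 1) = (1 - α k) • x k + α k • T k (avgMap (W k) (x k)))
    (hy : ∀ i j, y i = y j) (hTy : T k y = y) :
    ‖x (k + 1) - y‖ ^ 2 + α k * (1 - α k) * ‖x k - T k (avgMap (W k) (x k))‖ ^ 2
        + α k * (‖x k - y‖ ^ 2 - ‖avgMap (W k) (x k - y)‖ ^ 2) ≤ ‖x k - y‖ ^ 2 := by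
  rw [hx, avgMap_sub, avgMap_eq_self hW.2.1 hy]
  exact norm_krasnoselskii_sub_sq_add_le hT hTy hα _ _

theorem antitone_iterate_norm_sub (hT : ∀ k, Nonexpansive (T k))
    (hW : ∀ k, DoublyStochastic (W k)) (hα : ∀ k, α k ∈ Set.Icc 0 1)
    (hx : ∀ k, x (k + 1) = (1 - α k) • x k + α k • T k (avgMap (W k) (x k)))
    (hy : ∀ i j, y i = y j) (hTy : ∀ k, T k y = y) : Antitone fun k => ‖x k - y‖ := by
  refine antitone_nat_of_succ_le fun k => ?_
  have hstep := iterate_norm_sub_sq_add_le (hT k) (hW k) (hα k).1 (hx k) hy (hTy k)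
  have hres : 0 ≤ α k * (1 - α k) * ‖x k - T k (avgMap (W k) (x k))‖ ^ 2 :=
    mul_nonneg (mul_nonneg (hα k).1 (sub_nonneg.mpr (hα k).2)) (sq_nonneg _)
  have hdis := mul_nonneg (hα k).1 (norm_sq_sub_norm_avgMap_sq_nonneg (hW k) (x k - y))
  exact (pow_le_pow_iff_left₀ (norm_nonneg _) (norm_nonneg _) two_ne_zero).mp (by linarith)

theorem tendsto_iterate_residual_and_disagreement {ε : ℝ} (hε : 0 < ε)
    (hT : ∀ k, Nonexpansive (T k)) (hW : ∀ k, DoublyStochastic (W k))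
    (hα : ∀ k, α k ∈ Set.Icc ε (1 - ε))
    (hx : ∀ k, x (k + 1) = (1 - α k) • x k + α k • T k (avgMap (W k) (x k)))
    (hy : ∀ i j, y i = y j) (hTy : ∀ k, T k y = y) :
    Tendsto (fun k => x k - T k (avgMap (W k) (x k))) atTop (𝓝 0) ∧
      Tendsto (fun k => ‖x k - y‖ ^ 2 - ‖avgMap (W k) (x k - y)‖ ^ 2) atTop (𝓝 0) := by
  have hα₀ k : ε ≤ α k := (hα k).1
  have hα₁ k : ε ≤ 1 - α k := by linarith [(hα k).2]
  have hstep k := iterate_norm_sub_sq_add_le (hT k) (hW k) (hε.le.trans (hα₀ k)) (hx k) hy (hTy k)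
  have hD k : 0 ≤ ‖x k - y‖ ^ 2 := sq_nonneg _
  have hres k : ε * ε * ‖x k - T k (avgMap (W k) (x k))‖ ^ 2
      ≤ α k * (1 - α k) * ‖x k - T k (avgMap (W k) (x k))‖ ^ 2 :=
    mul_le_mul_of_nonneg_right (mul_le_mul (hα₀ k) (hα₁ k) hε.le (hε.le.trans (hα₀ k)))
      (sq_nonneg _)
  have hdis k : ε * (‖x k - y‖ ^ 2 - ‖avgMap (W k) (x k - y)‖ ^ 2)
      ≤ α k * (‖x k - y‖ ^ 2 - ‖avgMap (W k) (x k - y)‖ ^ 2) :=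
    mul_le_mul_of_nonneg_right (hα₀ k) (norm_sq_sub_norm_avgMap_sq_nonneg (hW k) _)
  have hres₀ k : 0 ≤ ε * ε * ‖x k - T k (avgMap (W k) (x k))‖ ^ 2 := by positivity
  have hdis₀ k : 0 ≤ ε * (‖x k - y‖ ^ 2 - ‖avgMap (W k) (x k - y)‖ ^ 2) :=
    mul_nonneg hε.le (norm_sq_sub_norm_avgMap_sq_nonneg (hW k) _)
  have hsum k : ‖x (k + 1) - y‖ ^ 2 + (ε * ε * ‖x k - T k (avgMap (W k) (x k))‖ ^ 2
      + ε * (‖x k - y‖ ^ 2 - ‖avgMap (W k) (x k - y)‖ ^ 2)) ≤ ‖x k - y‖ ^ 2 := by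
    linarith [hstep k, hres k, hdis k]
  constructor
  · have hsq := tendsto_zero_of_succ_add_le
      (c := fun k => ε * ε * ‖x k - T k (avgMap (W k) (x k))‖ ^ 2)
      (fun k => by linarith [hsum k, hdis₀ k]) hD hres₀
    replace hsq : Tendsto (fun k => ‖x k - T k (avgMap (W k) (x k))‖ ^ 2) atTop (𝓝 0) := by
      simpa [hε.ne'] using hsq.div_const (ε * ε)
    rw [tendsto_zero_iff_norm_tendsto_zero]
    simpa only [Real.sqrt_sq (norm_nonneg _), Real.sqrt_zero] using hsq.sqrt
  · have hlin := tendsto_zero_of_succ_add_le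
      (c := fun k => ε * (‖x k - y‖ ^ 2 - ‖avgMap (W k) (x k - y)‖ ^ 2))
      (fun k => by linarith [hsum k, hres₀ k]) hD hdis₀
    simpa [hε.ne'] using hlin.div_const ε

theorem tendsto_iterate_succ_sub (hα : ∀ k, α k ∈ Set.Icc 0 1)
    (hx : ∀ k, x (k + 1) = (1 - α k) • x k + α k • T k (avgMap (W k) (x k)))
    (hres : Tendsto (fun k => x k - T k (avgMap (W k) (x k))) atTop (𝓝 0)) :
    Tendsto (fun k => x (k + 1) - x k) atTop (𝓝 0) := by
  rw [tendsto_zero_iff_norm_tendsto_zero] at hres ⊢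
  refine squeeze_zero (fun _ => norm_nonneg _) (fun k => ?_) hres
  have hstep : x (k + 1) - x k = α k • (T k (avgMap (W k) (x k)) - x k) := by
    rw [hx k]; module
  rw [hstep, norm_smul, norm_sub_rev, Real.norm_of_nonneg (hα k).1]
  exact mul_le_of_le_one_left (norm_nonneg _) (hα k).2

theorem fixed_and_norm_avgMap_eq_of_tendsto_comp
    (hres : Tendsto (fun k => x k - T k (avgMap (W k) (x k))) atTop (𝓝 0))
    (hdis : Tendsto (fun k => ‖x k - y‖ ^ 2 - ‖avgMap (W k) (x k - y)‖ ^ 2) atTop (𝓝 0))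
    {σ : ℕ → ℕ} (hσ : Tendsto σ atTop atTop) {U : Y → Y} (hU : Continuous U)
    {V : Matrix (Fin N) (Fin N) ℝ} (hTσ : ∀ j, T (σ j) = U) (hWσ : ∀ j, W (σ j) = V) {p : Y}
    (hp : Tendsto (x ∘ σ) atTop (𝓝 p)) :
    U (avgMap V p) = p ∧ ‖avgMap V (p - y)‖ = ‖p - y‖ := by
  have hres' : p - U (avgMap V p) = 0 := by
    have hcont : Continuous fun z => z - U (avgMap V z) := by fun_prop
    refine tendsto_nhds_unique ((hcont.tendsto p).comp hp) ?_
    simpa [Function.comp_def, hTσ, hWσ] using hres.comp hσ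
  have hdis' : ‖p - y‖ ^ 2 - ‖avgMap V (p - y)‖ ^ 2 = 0 := by
    have hcont : Continuous fun z => ‖z - y‖ ^ 2 - ‖avgMap V (z - y)‖ ^ 2 := by fun_prop
    refine tendsto_nhds_unique ((hcont.tendsto p).comp hp) ?_
    simpa [Function.comp_def, hWσ] using hdis.comp hσ
  refine ⟨(sub_eq_zero.mp hres').symm, ?_⟩
  exact (pow_left_inj₀ (norm_nonneg _) (norm_nonneg _) two_ne_zero).mp (sub_eq_zero.mp hdis').symm

theorem exists_tendsto_subseq_of_window_finite {ε : ℝ} (hε : 0 < ε)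
    (hT : ∀ k, Nonexpansive (T k)) (hW : ∀ k, DoublyStochastic (W k))
    (hα : ∀ k, α k ∈ Set.Icc ε (1 - ε))
    (hx : ∀ k, x (k + 1) = (1 - α k) • x k + α k • T k (avgMap (W k) (x k)))
    (hy : ∀ i j, y i = y j) (hTy : ∀ k, T k y = y) {𝒯 : Set (Y → Y)} (h𝒯 : 𝒯.Finite)
    (hT𝒯 : ∀ k, T k ∈ 𝒯) {𝒲 : Set (Matrix (Fin N) (Fin N) ℝ)} (h𝒲 : 𝒲.Finite)
    (hW𝒲 : ∀ k, W k ∈ 𝒲) (Q : ℕ) :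
    ∃ σ : ℕ → ℕ, StrictMono σ ∧ ∃ p, Tendsto (x ∘ σ) atTop (𝓝 p) ∧ ∀ l ≤ Q,
      T (σ 0 + l) (avgMap (W (σ 0 + l)) p) = p ∧ ‖avgMap (W (σ 0 + l)) (p - y)‖ = ‖p - y‖ := by
  have hα₀₁ k : α k ∈ Set.Icc 0 1 := Set.Icc_subset_Icc hε.le (by linarith) (hα k)
  obtain ⟨hres, hdis⟩ := tendsto_iterate_residual_and_disagreement hε hT hW hα hx hy hTy
  obtain ⟨σ, hσ, hwin, p, hp⟩ := exists_strictMono_tendsto_of_finite (x := x)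
    (Metric.isBounded_closedBall (x := y) (r := ‖x 0 - y‖))
    (fun k => by
      rw [Metric.mem_closedBall, dist_eq_norm]
      exact antitone_iterate_norm_sub hT hW hα₀₁ hx hy hTy (Nat.zero_le k))
    (g := fun k (l : Fin (Q + 1)) => (T (k + l), W (k + l)))
    (Set.Finite.pi fun _ => h𝒯.prod h𝒲) (fun k => Set.mem_univ_pi.mpr fun l => ⟨hT𝒯 _, hW𝒲 _⟩)
  refine ⟨σ, hσ, p, hp, fun l hl => ?_⟩
  have hwinl j := Prod.ext_iff.mp (congrFun (hwin j) ⟨l, Nat.lt_succ_of_le hl⟩)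
  exact fixed_and_norm_avgMap_eq_of_tendsto_comp hres hdis
    (tendsto_atTop_mono (fun j => Nat.le_add_right _ _) hσ.tendsto_atTop)
    (hT (σ 0 + l)).continuous (fun j => (hwinl j).1) (fun j => (hwinl j).2)
    (tendsto_comp_add_of_tendsto_succ_sub (tendsto_iterate_succ_sub hα₀₁ hx hres)
      hσ.tendsto_atTop hp l)

end Iteration

theorem payoff_allocation_convergence_general
    (N Q : ℕ)
    (ε : ℝ) (hε : ε ∈ Set.Ioc (0 : ℝ) (1 / 2))
    (C₀ : Set (EuclideanSpace ℝ (Fin N)))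
    (hC₀ne : C₀.Nonempty)
    (𝒯 : Set (XSp N → XSp N)) (h𝒯fin : 𝒯.Finite)
    (h𝒯nonexp : ∀ T ∈ 𝒯, Nonexpansive T)
    (h𝒯fix : (⋂ T ∈ 𝒯, Function.fixedPoints T) = {x : XSp N | ∀ i, x i ∈ C₀})
    (𝒲 : Set (Matrix (Fin N) (Fin N) ℝ)) (h𝒲fin : 𝒲.Finite)
    (h𝒲 : ∀ W ∈ 𝒲, DoublyStochastic W ∧ ∀ i, 0 < W i i)
    (T : ℕ → (XSp N → XSp N)) (hT : ∀ k, T k ∈ 𝒯)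
    (hTQ : ∀ n : ℕ, {U | ∃ l ≤ Q, T (n + l) = U} = 𝒯)
    (W : ℕ → Matrix (Fin N) (Fin N) ℝ) (hW : ∀ k, W k ∈ 𝒲)
    (hWconn : ∀ k : ℕ, StronglyConnected
      {p : Fin N × Fin N | ∃ l, 1 ≤ l ∧ l ≤ Q ∧ 0 < W (k + l) p.1 p.2})
    (α : ℕ → ℝ) (hα : ∀ k, α k ∈ Set.Icc ε (1 - ε))
    (x : ℕ → XSp N)
    (hiter : ∀ k, x (k + 1) = (1 - α k) • x k + α k • T k (avgMap (W k) (x k))) :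
    ∃ xb : XSp N, Filter.Tendsto x Filter.atTop (nhds xb) ∧
      (∀ i j, xb i = xb j) ∧ (∀ i, xb i ∈ C₀) := by
  have hfix {z : XSp N} : (∀ i, z i ∈ C₀) ↔ ∀ U ∈ 𝒯, U z = z := by
    simpa only [Set.mem_iInter₂, Function.mem_fixedPoints, Function.IsFixedPt,
      Set.mem_ofPred_eq] using (Set.ext_iff.mp h𝒯fix z).symm
  have hTne k := h𝒯nonexp _ (hT k)
  have hWds k := (h𝒲 _ (hW k)).1
  have hα₀₁ k : α k ∈ Set.Icc 0 1 := Set.Icc_subset_Icc hε.1.le (by linarith [hε.1]) (hα k)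
  obtain ⟨c, hc⟩ := hC₀ne
  set y : XSp N := WithLp.toLp 2 fun _ => c
  have hy : ∀ i j, y i = y j := fun _ _ => rfl
  obtain ⟨σ, hσ, xb, hxb, hlim⟩ := exists_tendsto_subseq_of_window_finite hε.1 hTne hWds hα
    hiter hy (fun k => hfix.mp (fun _ => hc) _ (hT k)) h𝒯fin hT h𝒲fin hW Q
  have hcons : ∀ i j, xb i = xb j := by
    refine eq_of_stronglyConnected (hWconn (σ 0)) fun ⟨a, b⟩ ⟨l, _, hl, hab⟩ => ?_
    have := eq_of_norm_avgMap_eq (hWds _) ((h𝒲 _ (hW _)).2 a) hab (hlim l hl).2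
    simpa [hy a b] using this
  have hxbfix : ∀ U ∈ 𝒯, U xb = xb := by
    intro U hU
    obtain ⟨l, hl, rfl⟩ : ∃ l ≤ Q, T (σ 0 + l) = U := (hTQ (σ 0)).ge hU
    simpa [avgMap_eq_self (hWds _).2.1 hcons] using (hlim l hl).1
  refine ⟨xb, tendsto_of_antitone_norm_sub ?_ hσ.tendsto_atTop hxb, hcons, hfix.mpr hxbfix⟩
  exact antitone_iterate_norm_sub hTne hWds hα₀₁ hiter hcons fun k => hxbfix _ (hT k)

/-- Theorem 1 (Convergence of the distributed payoff allocation). -/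
theorem payoff_allocation_convergence
    (N Q : ℕ) (hN : 1 ≤ N) (hQ : 1 ≤ Q)
    (ε : ℝ) (hε : ε ∈ Set.Ioc (0 : ℝ) (1 / 2))
    (𝒱 : Set (Finset (Fin N) → ℝ)) (h𝒱fin : 𝒱.Finite) (h𝒱ne : 𝒱.Nonempty)
    (C₀ : Set (EuclideanSpace ℝ (Fin N))) (hC₀ : C₀ = ⋂ v ∈ 𝒱, core v)
    (hC₀ne : C₀.Nonempty)
    (𝒯 : Set (XSp N → XSp N)) (h𝒯fin : 𝒯.Finite)
    (h𝒯nonexp : ∀ T ∈ 𝒯, Nonexpansive T)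
    (h𝒯fix : (⋂ T ∈ 𝒯, Function.fixedPoints T) = {x : XSp N | ∀ i, x i ∈ C₀})
    (𝒲 : Set (Matrix (Fin N) (Fin N) ℝ)) (h𝒲fin : 𝒲.Finite)
    (h𝒲 : ∀ W ∈ 𝒲, DoublyStochastic W ∧ ∀ i, 0 < W i i)
    (T : ℕ → (XSp N → XSp N)) (hT : ∀ k, T k ∈ 𝒯)
    (hTQ : ∀ n : ℕ, {U | ∃ l ≤ Q, T (n + l) = U} = 𝒯)
    (W : ℕ → Matrix (Fin N) (Fin N) ℝ) (hW : ∀ k, W k ∈ 𝒲)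
    (hWconn : ∀ k : ℕ, StronglyConnected
      {p : Fin N × Fin N | ∃ l, 1 ≤ l ∧ l ≤ Q ∧ 0 < W (k + l) p.1 p.2})
    (α : ℕ → ℝ) (hα : ∀ k, α k ∈ Set.Icc ε (1 - ε))
    (x : ℕ → XSp N) (x0 : XSp N) (hx0 : x 0 = x0)
    (hiter : ∀ k, x (k + 1) = (1 - α k) • x k + α k • T k (avgMap (W k) (x k))) :
    ∃ xb : XSp N, Filter.Tendsto x Filter.atTop (nhds xb) ∧
      (∀ i j, xb i = xb j) ∧ (∀ i, xb i ∈ C₀) :=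
  payoff_allocation_convergence_general N Q ε hε C₀ hC₀ne 𝒯 h𝒯fin h𝒯nonexp h𝒯fix 𝒲 h𝒲fin h𝒲 T hT hTQ
    W hW hWconn α hα x hiter
end
end

section
/- Let n ≥ 1 and let D be a set of indices. Let (U_r)_{r∈D} be a family of nonexpansive maps on EuclideanSpace ℝ (Fin n) such that C = ⋂_{r∈D} fix(U_r) is nonempty. Let ε ∈ (0, 1/2] and let (α_k)_{k∈ℕ} satisfy α_k ∈ [ε, 1−ε] for all k. Let j : ℕ → D be an admissible sequence, i.e., for every r ∈ D there exists m ∈ ℕ such that for all n' ∈ ℕ there exists l ≤ m with j(n'+l) = r. Then for every initial point x⁰, the sequence generated by x^{k+1} = (1−α_k) x^k + α_k U_{j(k)}(x^k) converges to some point x̄ ∈ C. -/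
/-!
For a common fixed point `q`, the identity
`‖(1 - t) • a + t • b‖² = (1 - t)‖a‖² + t‖b‖² - t(1 - t)‖b - a‖²` applied to `a = x k - q`,
`b = U (j k) (x k) - q` gives `‖x (k+1) - q‖² ≤ ‖x k - q‖² - ε²‖U (j k) (x k) - x k‖²`.
So the iterates are Fejér monotone with respect to `C`, and the residuals are square-summable;
hence residuals and steps tend to `0`. The bounded iterates have a convergent subsequence
`x (φ i) → a`. For each `r ∈ D`, admissibility gives shifts `l i ≤ m` with `j (φ i + l i) = r`;
since the steps vanish, `x (φ i + l i) → a` too, and its `U r`-residuals vanish, so `U r a = a`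
by continuity. Thus `a ∈ C`, and Fejér monotonicity turns subsequential convergence into
convergence.
-/

open scoped BigOperators

noncomputable section

open Filter Topology Set Function

theorem Nonexpansive.lipschitzWith {E : Type*} [NormedAddCommGroup E] {T : E → E}
    (hT : Nonexpansive T) : LipschitzWith 1 T :=
  LipschitzWith.of_dist_le_mul fun a b => by simpa [dist_eq_norm] using hT a b

section Metric

variable {X : Type*} [MetricSpace X]

def FejerMonotone (x : ℕ → X) (C : Set X) : Prop :=
  ∀ q ∈ C, ∀ k, dist (x (k + 1)) q ≤ dist (x k) q

theorem FejerMonotone.antitone_dist {x : ℕ → X} {C : Set X} (hx : FejerMonotone x C) {q : X}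
    (hq : q ∈ C) : Antitone fun k => dist (x k) q :=
  antitone_nat_of_succ_le (hx q hq)

theorem FejerMonotone.tendsto_of_subseq {x : ℕ → X} {C : Set X} (hx : FejerMonotone x C)
    {a : X} (ha : a ∈ C) {φ : ℕ → ℕ} (hφ : StrictMono φ)
    (hxφ : Tendsto (x ∘ φ) atTop (𝓝 a)) : Tendsto x atTop (𝓝 a) := by
  have hconv := tendsto_atTop_ciInf (hx.antitone_dist ha) ⟨0, by rintro _ ⟨k, rfl⟩; exact dist_nonneg⟩
  have hsub : Tendsto (fun i => dist (x (φ i)) a) atTop (𝓝 0) :=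
    tendsto_iff_dist_tendsto_zero.1 hxφ
  have hinf : ⨅ k, dist (x k) a = 0 := tendsto_nhds_unique (hconv.comp hφ.tendsto_atTop) hsub
  rw [hinf] at hconv
  exact tendsto_iff_dist_tendsto_zero.2 hconv

theorem FejerMonotone.exists_tendsto [ProperSpace X] {x : ℕ → X} {C : Set X}
    (hx : FejerMonotone x C) (hC : C.Nonempty)
    (hlim : ∀ a (φ : ℕ → ℕ), StrictMono φ → Tendsto (x ∘ φ) atTop (𝓝 a) → a ∈ C) :
    ∃ a ∈ C, Tendsto x atTop (𝓝 a) := by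
  obtain ⟨q, hq⟩ := hC
  have hball : ∀ k, x k ∈ Metric.closedBall q (dist (x 0) q) := fun k =>
    Metric.mem_closedBall.2 (hx.antitone_dist hq (Nat.zero_le k))
  obtain ⟨a, -, φ, hφ, hxφ⟩ := tendsto_subseq_of_bounded Metric.isBounded_closedBall hball
  have ha := hlim a φ hφ hxφ
  exact ⟨a, ha, hx.tendsto_of_subseq ha hφ hxφ⟩

theorem tendsto_comp_add_of_tendsto_dist_succ {x : ℕ → X}
    (hstep : Tendsto (fun k => dist (x k) (x (k + 1))) atTop (𝓝 0))
    {ψ : ℕ → ℕ} (hψ : Tendsto ψ atTop atTop) {a : X} (hxψ : Tendsto (x ∘ ψ) atTop (𝓝 a))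
    {l : ℕ → ℕ} {m : ℕ} (hl : ∀ i, l i ≤ m) :
    Tendsto (fun i => x (ψ i + l i)) atTop (𝓝 a) := by
  refine hxψ.congr_dist (squeeze_zero (fun _ => dist_nonneg) (fun i => ?_)
    (g := fun i => ∑ t ∈ Finset.range m, dist (x (ψ i + t)) (x (ψ i + t + 1))) ?_)
  · calc dist (x (ψ i)) (x (ψ i + l i))
        ≤ ∑ t ∈ Finset.range (l i), dist (x (ψ i + t)) (x (ψ i + t + 1)) := by
          simpa [add_assoc] using dist_le_range_sum_dist (fun t => x (ψ i + t)) (l i)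
      _ ≤ ∑ t ∈ Finset.range m, dist (x (ψ i + t)) (x (ψ i + t + 1)) :=
          Finset.sum_le_sum_of_subset_of_nonneg (Finset.range_subset_range.2 (hl i))
            fun _ _ _ => dist_nonneg
  · simpa using tendsto_finsetSum (Finset.range m) fun t _ =>
      hstep.comp ((tendsto_add_atTop_nat t).comp hψ)

theorem isFixedPt_of_admissible {ι : Type*} {U : ι → X → X} {j : ℕ → ι} {r : ι}
    (hUr : Continuous (U r)) (hadm : ∃ m : ℕ, ∀ n' : ℕ, ∃ l ≤ m, j (n' + l) = r)
    {x : ℕ → X} (hres : Tendsto (fun k => dist (U (j k) (x k)) (x k)) atTop (𝓝 0))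
    (hstep : Tendsto (fun k => dist (x k) (x (k + 1))) atTop (𝓝 0))
    {φ : ℕ → ℕ} (hφ : StrictMono φ) {a : X} (hxφ : Tendsto (x ∘ φ) atTop (𝓝 a)) :
    IsFixedPt (U r) a := by
  obtain ⟨m, hm⟩ := hadm
  choose l hlm hlj using fun i => hm (φ i)
  have hψ : Tendsto (fun i => φ i + l i) atTop atTop :=
    tendsto_atTop_mono (fun i => le_add_right (hφ.id_le i)) tendsto_id
  have hy : Tendsto (fun i => x (φ i + l i)) atTop (𝓝 a) :=
    tendsto_comp_add_of_tendsto_dist_succ hstep hφ.tendsto_atTop hxφ hlm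
  have hUy : Tendsto (fun i => U r (x (φ i + l i))) atTop (𝓝 a) := by
    refine hy.congr_dist ?_
    simpa [comp_def, hlj, dist_comm] using hres.comp hψ
  exact tendsto_nhds_unique ((hUr.tendsto a).comp hy) hUy

end Metric

def IsKrasnoselskiiMannSeq {E : Type*} [AddCommGroup E] [Module ℝ E] (T : ℕ → E → E)
    (α : ℕ → ℝ) (x : ℕ → E) : Prop :=
  ∀ k, x (k + 1) = (1 - α k) • x k + α k • T k (x k)

section InnerProduct

variable {E : Type*} [NormedAddCommGroup E] [InnerProductSpace ℝ E]

theorem norm_one_sub_smul_add_smul_sq (a b : E) (t : ℝ) :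
    ‖(1 - t) • a + t • b‖ ^ 2
      = (1 - t) * ‖a‖ ^ 2 + t * ‖b‖ ^ 2 - t * (1 - t) * ‖b - a‖ ^ 2 := by
  simp only [← real_inner_self_eq_norm_sq, inner_add_left, inner_add_right, inner_sub_left,
    inner_sub_right, real_inner_smul_left, real_inner_smul_right, real_inner_comm a b]
  ring

theorem norm_one_sub_smul_add_smul_sub_sq_le {T : E → E} {y q : E}
    (hq : ‖T y - q‖ ≤ ‖y - q‖) {t : ℝ} (ht : 0 ≤ t) :
    ‖(1 - t) • y + t • T y - q‖ ^ 2 ≤ ‖y - q‖ ^ 2 - t * (1 - t) * ‖T y - y‖ ^ 2 := by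
  have h := norm_one_sub_smul_add_smul_sq (y - q) (T y - q) t
  rw [show (1 - t) • (y - q) + t • (T y - q) = (1 - t) • y + t • T y - q by module,
    show T y - q - (y - q) = T y - y by abel] at h
  have hsq : ‖T y - q‖ ^ 2 ≤ ‖y - q‖ ^ 2 := pow_le_pow_left₀ (norm_nonneg _) hq 2
  nlinarith

namespace IsKrasnoselskiiMannSeq

variable {T : ℕ → E → E} {α : ℕ → ℝ} {x : ℕ → E} {C : Set E}

theorem norm_sub_sq_succ_le (hx : IsKrasnoselskiiMannSeq T α x)
    (hT : ∀ k, ∀ q ∈ C, ∀ y, ‖T k y - q‖ ≤ ‖y - q‖) (hα : ∀ k, 0 ≤ α k) {q : E} (hq : q ∈ C)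
    (k : ℕ) :
    ‖x (k + 1) - q‖ ^ 2 ≤ ‖x k - q‖ ^ 2 - α k * (1 - α k) * ‖T k (x k) - x k‖ ^ 2 :=
  hx k ▸ norm_one_sub_smul_add_smul_sub_sq_le (hT k q hq (x k)) (hα k)

theorem fejerMonotone (hx : IsKrasnoselskiiMannSeq T α x)
    (hT : ∀ k, ∀ q ∈ C, ∀ y, ‖T k y - q‖ ≤ ‖y - q‖) (hα : ∀ k, α k ∈ Icc (0 : ℝ) 1) :
    FejerMonotone x C := by
  intro q hq k
  have h := hx.norm_sub_sq_succ_le hT (fun k => (hα k).1) hq k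
  have hprod : 0 ≤ α k * (1 - α k) := mul_nonneg (hα k).1 (sub_nonneg.2 (hα k).2)
  rw [dist_eq_norm, dist_eq_norm]
  exact (pow_le_pow_iff_left₀ (norm_nonneg _) (norm_nonneg _) two_ne_zero).1
    (h.trans (sub_le_self _ (mul_nonneg hprod (sq_nonneg _))))

theorem sum_sq_dist_residual_le (hx : IsKrasnoselskiiMannSeq T α x)
    (hT : ∀ k, ∀ q ∈ C, ∀ y, ‖T k y - q‖ ≤ ‖y - q‖) {ε : ℝ} (hε : 0 < ε)
    (hα : ∀ k, α k ∈ Icc ε (1 - ε)) {q : E} (hq : q ∈ C) (N : ℕ) :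
    ε ^ 2 * ∑ k ∈ Finset.range N, dist (T k (x k)) (x k) ^ 2
      ≤ ‖x 0 - q‖ ^ 2 - ‖x N - q‖ ^ 2 := by
  induction N with
  | zero => simp
  | succ N ih =>
    have hstep := hx.norm_sub_sq_succ_le hT (fun k => hε.le.trans (hα k).1) hq N
    have hεα : ε * ε ≤ α N * (1 - α N) :=
      mul_le_mul (hα N).1 (by linarith [(hα N).2]) hε.le (by linarith [(hα N).1])
    rw [Finset.sum_range_succ, mul_add, dist_eq_norm]
    nlinarith [sq_nonneg ‖T N (x N) - x N‖]

theorem tendsto_dist_residual (hx : IsKrasnoselskiiMannSeq T α x)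
    (hT : ∀ k, ∀ q ∈ C, ∀ y, ‖T k y - q‖ ≤ ‖y - q‖) {ε : ℝ} (hε : 0 < ε)
    (hα : ∀ k, α k ∈ Icc ε (1 - ε)) (hC : C.Nonempty) :
    Tendsto (fun k => dist (T k (x k)) (x k)) atTop (𝓝 0) := by
  obtain ⟨q, hq⟩ := hC
  have hsum : Summable fun k => dist (T k (x k)) (x k) ^ 2 := by
    refine summable_of_sum_range_le (c := ‖x 0 - q‖ ^ 2 / ε ^ 2) (fun _ => sq_nonneg _)
      fun N => (le_div_iff₀' (by positivity)).2 ?_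
    linarith [hx.sum_sq_dist_residual_le hT hε hα hq N, sq_nonneg ‖x N - q‖]
  simpa [Real.sqrt_sq dist_nonneg] using hsum.tendsto_atTop_zero.sqrt

theorem tendsto_dist_succ (hx : IsKrasnoselskiiMannSeq T α x) (hα : ∀ k, α k ∈ Icc (0 : ℝ) 1)
    (hres : Tendsto (fun k => dist (T k (x k)) (x k)) atTop (𝓝 0)) :
    Tendsto (fun k => dist (x k) (x (k + 1))) atTop (𝓝 0) := by
  refine squeeze_zero (fun _ => dist_nonneg) (fun k => ?_) hres
  have hdiff : x (k + 1) - x k = α k • (T k (x k) - x k) := by rw [hx k]; module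
  rw [dist_comm, dist_eq_norm, hdiff, norm_smul, Real.norm_of_nonneg (hα k).1, dist_eq_norm]
  exact mul_le_of_le_one_left (norm_nonneg _) (hα k).2

end IsKrasnoselskiiMannSeq

end InnerProduct

theorem browder_admissible_convergence_general
    (n : ℕ) {ι : Type*} (D : Set ι)
    (U : ι → (EuclideanSpace ℝ (Fin n) → EuclideanSpace ℝ (Fin n)))
    (hU : ∀ r ∈ D, Nonexpansive (U r))
    (C : Set (EuclideanSpace ℝ (Fin n)))
    (hC : C = ⋂ r ∈ D, Function.fixedPoints (U r)) (hCne : C.Nonempty)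
    (ε : ℝ) (hε : ε ∈ Set.Ioc (0 : ℝ) (1 / 2))
    (α : ℕ → ℝ) (hα : ∀ k, α k ∈ Set.Icc ε (1 - ε))
    (j : ℕ → ι) (hjD : ∀ k, j k ∈ D)
    (hadm : ∀ r ∈ D, ∃ m : ℕ, ∀ n' : ℕ, ∃ l ≤ m, j (n' + l) = r)
    (x : ℕ → EuclideanSpace ℝ (Fin n))
    (hiter : ∀ k, x (k + 1) = (1 - α k) • x k + α k • U (j k) (x k)) :
    ∃ xb ∈ C, Filter.Tendsto x Filter.atTop (nhds xb) := by
  subst hC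
  have hKM : IsKrasnoselskiiMannSeq (fun k => U (j k)) α x := hiter
  have hquasi : ∀ k, ∀ q ∈ ⋂ r ∈ D, fixedPoints (U r), ∀ y, ‖U (j k) y - q‖ ≤ ‖y - q‖ :=
    fun k q hq y => by
      have hfix : U (j k) q = q := mem_iInter₂.1 hq (j k) (hjD k)
      simpa only [hfix] using hU (j k) (hjD k) y q
  have hα01 : ∀ k, α k ∈ Icc (0 : ℝ) 1 := fun k =>
    ⟨hε.1.le.trans (hα k).1, (hα k).2.trans (sub_le_self 1 hε.1.le)⟩
  have hres := hKM.tendsto_dist_residual hquasi hε.1 hα hCne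
  have hstep := hKM.tendsto_dist_succ hα01 hres
  exact (hKM.fejerMonotone hquasi hα01).exists_tendsto hCne fun a φ hφ hxφ =>
    mem_iInter₂.2 fun r hr =>
      isFixedPt_of_admissible (hU r hr).lipschitzWith.continuous (hadm r hr) hres hstep hφ hxφ

/-- Browder's theorem (Lemma 1): the Krasnoselskii–Mann iteration driven by an
admissible sequence of nonexpansive maps converges to a common fixed point. -/
theorem browder_admissible_convergence
    (n : ℕ) (hn : 1 ≤ n) {ι : Type*} (D : Set ι)
    (U : ι → (EuclideanSpace ℝ (Fin n) → EuclideanSpace ℝ (Fin n)))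
    (hU : ∀ r ∈ D, Nonexpansive (U r))
    (C : Set (EuclideanSpace ℝ (Fin n)))
    (hC : C = ⋂ r ∈ D, Function.fixedPoints (U r)) (hCne : C.Nonempty)
    (ε : ℝ) (hε : ε ∈ Set.Ioc (0 : ℝ) (1 / 2))
    (α : ℕ → ℝ) (hα : ∀ k, α k ∈ Set.Icc ε (1 - ε))
    (j : ℕ → ι) (hjD : ∀ k, j k ∈ D)
    (hadm : ∀ r ∈ D, ∃ m : ℕ, ∀ n' : ℕ, ∃ l ≤ m, j (n' + l) = r)
    (x : ℕ → EuclideanSpace ℝ (Fin n)) (x0 : EuclideanSpace ℝ (Fin n))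
    (hx0 : x 0 = x0)
    (hiter : ∀ k, x (k + 1) = (1 - α k) • x k + α k • U (j k) (x k)) :
    ∃ xb ∈ C, Filter.Tendsto x Filter.atTop (nhds xb) :=
  browder_admissible_convergence_general n D U hU C hC hCne ε hε α hα j hjD hadm x hiter
end
end

section
/- Let E be a real normed vector space and let T₁, T₂ : E → E be nonexpansive maps. Then the composition T₁ ∘ T₂ is nonexpansive. Moreover, if in addition either T₁ or T₂ is a paracontraction and fix(T₁) ∩ fix(T₂) ≠ ∅, then fix(T₁ ∘ T₂) = fix(T₁) ∩ fix(T₂). -/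
open scoped BigOperators

noncomputable section

/-! If `z` is a common fixed point and `T₁ (T₂ x) = x`, then
`‖x - z‖ ≤ ‖T₂ x - z‖ ≤ ‖x - z‖`, so neither map moves its argument closer to `z`, whereas a
paracontraction moves every point it does not fix strictly closer to `z`. -/

open Function

section

variable {E : Type*} [NormedAddCommGroup E] {T T₁ T₂ : E → E} {x z : E}

theorem Nonexpansive.comp (h₁ : Nonexpansive T₁) (h₂ : Nonexpansive T₂) :
    Nonexpansive (T₁ ∘ T₂) :=
  fun x y => (h₁ (T₂ x) (T₂ y)).trans (h₂ x y)

theorem Nonexpansive.norm_sub_le_of_isFixedPt (hT : Nonexpansive T) (hz : IsFixedPt T z)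
    (x : E) : ‖T x - z‖ ≤ ‖x - z‖ := by
  simpa only [hz.eq] using hT x z

theorem Paracontraction.isFixedPt_of_norm_sub_le (hT : Paracontraction T) (hz : IsFixedPt T z)
    (hle : ‖x - z‖ ≤ ‖T x - z‖) : IsFixedPt T x := by
  by_contra hx
  exact (hle.trans_lt (hT.2 x z hx hz)).false

theorem Function.IsFixedPt.right_of_comp_of_paracontraction_left (hx : IsFixedPt (T₁ ∘ T₂) x)
    (h₁ : Paracontraction T₁) (h₂ : Nonexpansive T₂) (hz₁ : IsFixedPt T₁ z)
    (hz₂ : IsFixedPt T₂ z) : IsFixedPt T₂ x := by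
  have hle : ‖T₂ x - z‖ ≤ ‖T₁ (T₂ x) - z‖ := by
    rw [show T₁ (T₂ x) = x from hx]
    exact h₂.norm_sub_le_of_isFixedPt hz₂ x
  have hfix : T₁ (T₂ x) = T₂ x := h₁.isFixedPt_of_norm_sub_le hz₁ hle
  exact hfix.symm.trans hx

theorem Function.IsFixedPt.right_of_comp_of_paracontraction_right (hx : IsFixedPt (T₁ ∘ T₂) x)
    (h₁ : Nonexpansive T₁) (h₂ : Paracontraction T₂) (hz₁ : IsFixedPt T₁ z)
    (hz₂ : IsFixedPt T₂ z) : IsFixedPt T₂ x := by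
  refine h₂.isFixedPt_of_norm_sub_le hz₂ ?_
  calc ‖x - z‖ = ‖T₁ (T₂ x) - z‖ := by rw [show T₁ (T₂ x) = x from hx]
    _ ≤ ‖T₂ x - z‖ := h₁.norm_sub_le_of_isFixedPt hz₁ (T₂ x)

end

theorem composition_nonexpansive_general
    {E : Type*} [NormedAddCommGroup E]
    (T₁ T₂ : E → E) (h₁ : Nonexpansive T₁) (h₂ : Nonexpansive T₂) :
    Nonexpansive (T₁ ∘ T₂) ∧
    ((Paracontraction T₁ ∨ Paracontraction T₂) →
      (Function.fixedPoints T₁ ∩ Function.fixedPoints T₂).Nonempty →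
      Function.fixedPoints (T₁ ∘ T₂) =
        Function.fixedPoints T₁ ∩ Function.fixedPoints T₂) := by
  refine ⟨h₁.comp h₂, fun hpc ⟨z, hz₁, hz₂⟩ => ?_⟩
  refine Set.Subset.antisymm (fun x hx => ?_) (fun x hx => hx.1.comp hx.2)
  have hx₂ : IsFixedPt T₂ x := by
    rcases hpc with hpc₁ | hpc₂
    · exact hx.right_of_comp_of_paracontraction_left hpc₁ h₂ hz₁ hz₂
    · exact hx.right_of_comp_of_paracontraction_right h₁ hpc₂ hz₁ hz₂
  exact ⟨hx.left_of_comp hx₂, hx₂⟩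

/-- Lemma 3: the composition of nonexpansive operators is nonexpansive; if moreover
one of them is a paracontraction and their fixed-point sets intersect, then the
fixed-point set of the composition is the intersection of the fixed-point sets. -/
theorem composition_nonexpansive
    {E : Type*} [NormedAddCommGroup E] [NormedSpace ℝ E]
    (T₁ T₂ : E → E) (h₁ : Nonexpansive T₁) (h₂ : Nonexpansive T₂) :
    Nonexpansive (T₁ ∘ T₂) ∧
    ((Paracontraction T₁ ∨ Paracontraction T₂) →
      (Function.fixedPoints T₁ ∩ Function.fixedPoints T₂).Nonempty →
      Function.fixedPoints (T₁ ∘ T₂) =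
        Function.fixedPoints T₁ ∩ Function.fixedPoints T₂) :=
  composition_nonexpansive_general T₁ T₂ h₁ h₂
end
end

section
/- Let E be a real normed vector space and let M₁, M₂ : E → E be paracontractions with respect to the norm of E such that fix(M₁) ∩ fix(M₂) ≠ ∅. Then the composition M₁ ∘ M₂ is a paracontraction with respect to the norm of E, and fix(M₁ ∘ M₂) = fix(M₁) ∩ fix(M₂). -/
open scoped BigOperators

noncomputable section

/-!
A paracontraction never increases the distance to a fixed point, and strictly decreases it
from a non-fixed point. So for a common fixed point `z` and `M₂ x ≠ x`,
`‖M₁ (M₂ x) - z‖ ≤ ‖M₂ x - z‖ < ‖x - z‖`; in particular `x` is not fixed by `M₁ ∘ M₂`.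
Hence every fixed point of `M₁ ∘ M₂` is fixed by `M₂`, and then by `M₁`, and the same
chain of inequalities with `z` replaced by any fixed point of `M₁ ∘ M₂` gives the
paracontraction inequality for the composition.
-/

namespace Paracontraction

open Function

variable {E : Type*} [NormedAddCommGroup E] {M M₁ M₂ : E → E} {x y : E}

theorem norm_apply_sub_le (h : Paracontraction M) (x : E) (hy : M y = y) :
    ‖M x - y‖ ≤ ‖x - y‖ := by
  by_cases hx : M x = x
  · rw [hx]
  · exact (h.2 x y hx hy).le

theorem norm_comp_apply_sub_lt (h₁ : Paracontraction M₁) (h₂ : Paracontraction M₂)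
    (hx : M₂ x ≠ x) (hy₁ : M₁ y = y) (hy₂ : M₂ y = y) : ‖M₁ (M₂ x) - y‖ < ‖x - y‖ :=
  (h₁.norm_apply_sub_le (M₂ x) hy₁).trans_lt (h₂.2 x y hx hy₂)

theorem fixedPoints_comp (h₁ : Paracontraction M₁) (h₂ : Paracontraction M₂) {z : E}
    (hz : z ∈ fixedPoints M₁ ∩ fixedPoints M₂) :
    fixedPoints (M₁ ∘ M₂) = fixedPoints M₁ ∩ fixedPoints M₂ := by
  ext x
  refine ⟨fun hx => ?_, fun hx => hx.1.comp hx.2⟩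
  have hx₂ : IsFixedPt M₂ x := by
    by_contra hne
    have hlt := h₁.norm_comp_apply_sub_lt h₂ hne hz.1 hz.2
    rw [show M₁ (M₂ x) = x from hx] at hlt
    exact hlt.false
  exact ⟨hx.left_of_comp hx₂, hx₂⟩

theorem comp (h₁ : Paracontraction M₁) (h₂ : Paracontraction M₂)
    (hfix : (fixedPoints M₁ ∩ fixedPoints M₂).Nonempty) : Paracontraction (M₁ ∘ M₂) := by
  obtain ⟨z, hz⟩ := hfix
  refine ⟨h₁.1.comp h₂.1, fun x y hx hy => ?_⟩
  have hy : y ∈ fixedPoints M₁ ∩ fixedPoints M₂ := h₁.fixedPoints_comp h₂ hz ▸ hy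
  by_cases hx₂ : M₂ x = x
  · simp only [comp_apply, hx₂] at hx ⊢
    exact h₁.2 x y hx hy.1
  · exact h₁.norm_comp_apply_sub_lt h₂ hx₂ hy.1 hy.2

end Paracontraction

theorem composition_paracontraction_general
    {E : Type*} [NormedAddCommGroup E]
    (M₁ M₂ : E → E) (h₁ : Paracontraction M₁) (h₂ : Paracontraction M₂)
    (hfix : (Function.fixedPoints M₁ ∩ Function.fixedPoints M₂).Nonempty) :
    Paracontraction (M₁ ∘ M₂) ∧
    Function.fixedPoints (M₁ ∘ M₂) =
      Function.fixedPoints M₁ ∩ Function.fixedPoints M₂ :=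
  ⟨h₁.comp h₂ hfix, h₁.fixedPoints_comp h₂ hfix.some_mem⟩

/-- Lemma 4: the composition of paracontractions with intersecting fixed-point
sets is a paracontraction whose fixed-point set is the intersection. -/
theorem composition_paracontraction
    {E : Type*} [NormedAddCommGroup E] [NormedSpace ℝ E]
    (M₁ M₂ : E → E) (h₁ : Paracontraction M₁) (h₂ : Paracontraction M₂)
    (hfix : (Function.fixedPoints M₁ ∩ Function.fixedPoints M₂).Nonempty) :
    Paracontraction (M₁ ∘ M₂) ∧
    Function.fixedPoints (M₁ ∘ M₂) =
      Function.fixedPoints M₁ ∩ Function.fixedPoints M₂ :=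
  composition_paracontraction_general M₁ M₂ h₁ h₂ hfix
end
end

section
/- Let E be a finite-dimensional real normed vector space and let ℳ be a finite family of paracontractions on E (with respect to the norm of E) such that ⋂_{M∈ℳ} fix(M) ≠ ∅. Let (M^k)_{k∈ℕ} be any sequence with M^k ∈ ℳ for all k, and let (x^k)_{k∈ℕ} be generated by x^{k+1} = M^k(x^k) from any initial point x⁰ ∈ E. Then (x^k) converges to some point x̄ ∈ E such that M(x̄) = x̄ for every operator M ∈ ℳ that occurs infinitely often in the sequence (M^k), i.e., for every M such that {k | M^k = M} is infinite. -/
open scoped BigOperators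

noncomputable section

/-!
The distance from the iterates to a common fixed point `y` decreases, so it converges to some
`d ≥ 0` and the iterates stay in a compact ball; let `z` be the limit of a subsequence. If an
operator `M` is applied infinitely often at indices where the iterates approach `z`, then both
`z` and `M z` lie at distance `d` from `y`, which forces `M z = z`. If infinitely many of the
applied operators did not fix `z`, moving from each index of the subsequence to the next such
operator only applies operators fixing `z`, so the iterates stay close to `z`; by pigeonhole one
non-fixing operator recurs there, a contradiction. Hence eventually every applied operator fixes
`z`, the distance to `z` eventually decreases, and the whole sequence converges to `z`.
-/

open Filter Topology

section Paracontraction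

variable {E : Type*} [NormedAddCommGroup E] {M : E → E} {Mseq : ℕ → E → E} {x : ℕ → E}
  {y z : E}

theorem Paracontraction.norm_sub_le (hM : Paracontraction M) (hz : M z = z) (w : E) :
    ‖M w - z‖ ≤ ‖w - z‖ := by
  by_cases hw : M w = w
  · rw [hw]
  · exact (hM.2 w z hw hz).le

theorem norm_iterate_sub_le (hiter : ∀ k, x (k + 1) = Mseq k (x k))
    (hpara : ∀ k, Paracontraction (Mseq k)) {a b : ℕ} (hab : a ≤ b)
    (hfix : ∀ k ∈ Set.Ico a b, Mseq k z = z) : ‖x b - z‖ ≤ ‖x a - z‖ := by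
  induction b, hab using Nat.le_induction with
  | base => exact le_rfl
  | succ b hab ih =>
    calc ‖x (b + 1) - z‖ ≤ ‖x b - z‖ := by
          rw [hiter]; exact (hpara b).norm_sub_le (hfix b ⟨hab, b.lt_succ_self⟩) _
      _ ≤ ‖x a - z‖ := ih fun k hk => hfix k ⟨hk.1, hk.2.trans b.lt_succ_self⟩

theorem tendsto_comp_of_forall_mem_Ico_fixed {ι : Type*} {l : Filter ι} {φ s : ι → ℕ}
    (hiter : ∀ k, x (k + 1) = Mseq k (x k)) (hpara : ∀ k, Paracontraction (Mseq k))
    (hφs : ∀ j, φ j ≤ s j) (hfix : ∀ j, ∀ k ∈ Set.Ico (φ j) (s j), Mseq k z = z)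
    (hz : Tendsto (x ∘ φ) l (𝓝 z)) : Tendsto (x ∘ s) l (𝓝 z) := by
  rw [tendsto_iff_norm_sub_tendsto_zero] at hz ⊢
  exact squeeze_zero (fun _ => norm_nonneg _)
    (fun j => norm_iterate_sub_le hiter hpara (hφs j) (hfix j)) hz

theorem Paracontraction.eq_of_tendsto_subseq (hM : Paracontraction M) (hy : M y = y)
    {d : ℝ} (hd : Tendsto (fun k => ‖x k - y‖) atTop (𝓝 d))
    (hiter : ∀ k, x (k + 1) = Mseq k (x k)) {φ : ℕ → ℕ} (hφ : Tendsto φ atTop atTop)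
    (hMφ : ∀ j, Mseq (φ j) = M) (hz : Tendsto (x ∘ φ) atTop (𝓝 z)) : M z = z := by
  have hz_dist : ‖z - y‖ = d := tendsto_nhds_unique (hz.sub_const y).norm (hd.comp hφ)
  have hMz : Tendsto (fun j => x (φ j + 1)) atTop (𝓝 (M z)) := by
    simp only [hiter, hMφ]
    exact (hM.1.tendsto z).comp hz
  have hMz_dist : ‖M z - y‖ = d :=
    tendsto_nhds_unique (hMz.sub_const y).norm
      (hd.comp (tendsto_atTop_mono (fun j => (φ j).le_succ) hφ))
  by_contra hne
  exact (hM.2 z y hne hy).ne (hMz_dist.trans hz_dist.symm)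

theorem eventually_fixed_of_tendsto_subseq {ℳ : Set (E → E)} (hfin : ℳ.Finite)
    (hpara : ∀ M ∈ ℳ, Paracontraction M) (hMseq : ∀ k, Mseq k ∈ ℳ)
    (hy : ∀ M ∈ ℳ, M y = y) {d : ℝ} (hd : Tendsto (fun k => ‖x k - y‖) atTop (𝓝 d))
    (hiter : ∀ k, x (k + 1) = Mseq k (x k)) {φ : ℕ → ℕ} (hφ : Tendsto φ atTop atTop)
    (hz : Tendsto (x ∘ φ) atTop (𝓝 z)) : ∀ᶠ k in atTop, Mseq k z = z := by
  classical
  by_contra hnot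
  have hnext : ∀ j, ∃ k, φ j ≤ k ∧ Mseq k z ≠ z := fun j =>
    (not_eventually.mp hnot).forall_exists_of_atTop (φ j)
  let s j := Nat.find (hnext j)
  have hφs (j : ℕ) : φ j ≤ s j := (Nat.find_spec (hnext j)).1
  have hs_top : Tendsto s atTop atTop := tendsto_atTop_mono hφs hφ
  have hs : Tendsto (x ∘ s) atTop (𝓝 z) :=
    tendsto_comp_of_forall_mem_Ico_fixed hiter (fun k => hpara _ (hMseq k)) hφs
      (fun j k hk => by_contra fun hne => Nat.find_min (hnext j) hk.2 ⟨hk.1, hne⟩) hz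
  obtain ⟨M, hM, hfreq⟩ : ∃ M ∈ ℳ, ∃ᶠ j in atTop, Mseq (s j) = M :=
    hfin.frequently_exists.mp (Frequently.of_forall fun j => ⟨_, hMseq (s j), rfl⟩)
  obtain ⟨ψ, hψ, hMψ⟩ := extraction_of_frequently_atTop hfreq
  have hMz : M z = z := (hpara M hM).eq_of_tendsto_subseq (hy M hM) hd hiter
    (hs_top.comp hψ.tendsto_atTop) hMψ (hs.comp hψ.tendsto_atTop)
  exact (Nat.find_spec (hnext (ψ 0))).2 (by rw [hMψ 0]; exact hMz)

theorem tendsto_of_tendsto_subseq_of_eventually_fixed (hiter : ∀ k, x (k + 1) = Mseq k (x k))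
    (hpara : ∀ k, Paracontraction (Mseq k)) (hfix : ∀ᶠ k in atTop, Mseq k z = z)
    {φ : ℕ → ℕ} (hφ : Tendsto φ atTop atTop) (hz : Tendsto (x ∘ φ) atTop (𝓝 z)) :
    Tendsto x atTop (𝓝 z) := by
  obtain ⟨K, hK⟩ := eventually_atTop.mp hfix
  rw [tendsto_iff_norm_sub_tendsto_zero] at hz ⊢
  refine tendsto_order.2 ⟨fun a ha => .of_forall fun k => ha.trans_le (norm_nonneg _),
    fun ε hε => ?_⟩
  obtain ⟨j, hjK, hjε⟩ :=
    ((hφ.eventually_ge_atTop K).and (hz.eventually (gt_mem_nhds hε))).exists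
  filter_upwards [eventually_ge_atTop (φ j)] with k hk
  exact (norm_iterate_sub_le hiter hpara hk fun i hi => hK i (hjK.trans hi.1)).trans_lt hjε

end Paracontraction

theorem elsner_finite_family_convergence_general
    {E : Type*} [NormedAddCommGroup E] [NormedSpace ℝ E] [FiniteDimensional ℝ E]
    (ℳ : Set (E → E)) (hfin : ℳ.Finite)
    (hpara : ∀ M ∈ ℳ, Paracontraction M)
    (hcommon : (⋂ M ∈ ℳ, Function.fixedPoints M).Nonempty)
    (Mseq : ℕ → (E → E)) (hMseq : ∀ k, Mseq k ∈ ℳ)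
    (x : ℕ → E)
    (hiter : ∀ k, x (k + 1) = Mseq k (x k)) :
    ∃ xb : E, Filter.Tendsto x Filter.atTop (nhds xb) ∧
      ∀ M ∈ ℳ, {k : ℕ | Mseq k = M}.Infinite → M xb = xb := by
  obtain ⟨y, hy⟩ := hcommon
  replace hy : ∀ M ∈ ℳ, M y = y := fun M hM => Set.mem_iInter₂.mp hy M hM
  have hparaSeq (k : ℕ) : Paracontraction (Mseq k) := hpara _ (hMseq k)
  have hanti : Antitone fun k => ‖x k - y‖ := antitone_nat_of_succ_le fun k =>
    norm_iterate_sub_le hiter hparaSeq k.le_succ fun i _ => hy _ (hMseq i)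
  have hd := tendsto_atTop_ciInf hanti ⟨0, by rintro _ ⟨k, rfl⟩; exact norm_nonneg _⟩
  obtain ⟨z, -, φ, hφ, hz⟩ := (isCompact_closedBall y ‖x 0 - y‖).tendsto_subseq
    (x := x) fun k => by simpa only [Metric.mem_closedBall, dist_eq_norm] using hanti k.zero_le
  have hfix := eventually_fixed_of_tendsto_subseq hfin hpara hMseq hy hd hiter
    hφ.tendsto_atTop hz
  refine ⟨z, tendsto_of_tendsto_subseq_of_eventually_fixed hiter hparaSeq hfix
    hφ.tendsto_atTop hz, fun M _ hM => ?_⟩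
  obtain ⟨k, rfl, hk⟩ := ((Nat.frequently_atTop_iff_infinite.mpr hM).and_eventually hfix).exists
  exact hk

/-- Lemma 6 (Elsner–Koltracht–Neumann): iterating paracontractions from a finite
family with a common fixed point converges to a common fixed point of the
operators occurring infinitely often. -/
theorem elsner_finite_family_convergence
    {E : Type*} [NormedAddCommGroup E] [NormedSpace ℝ E] [FiniteDimensional ℝ E]
    (ℳ : Set (E → E)) (hfin : ℳ.Finite)
    (hpara : ∀ M ∈ ℳ, Paracontraction M)
    (hcommon : (⋂ M ∈ ℳ, Function.fixedPoints M).Nonempty)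
    (Mseq : ℕ → (E → E)) (hMseq : ∀ k, Mseq k ∈ ℳ)
    (x : ℕ → E) (x0 : E) (hx0 : x 0 = x0)
    (hiter : ∀ k, x (k + 1) = Mseq k (x k)) :
    ∃ xb : E, Filter.Tendsto x Filter.atTop (nhds xb) ∧
      ∀ M ∈ ℳ, {k : ℕ | Mseq k = M}.Infinite → M xb = xb :=
  elsner_finite_family_convergence_general ℳ hfin hpara hcommon Mseq hMseq x hiter
end
end

section
/- Let N ≥ 1 and let W be an N×N doubly stochastic real matrix with strictly positive diagonal entries whose support edge set {(i,j) | W_{ij} > 0} is strongly connected on Fin N. Then a vector x : Fin N → ℝ satisfies W.mulVec x = x if and only if x is constant, i.e., there exists c ∈ ℝ with x_i = c for all i. Equivalently, the fixed-point set of the linear map x ↦ W x is exactly the set of consensus (constant) vectors. -/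
/-!
A row-stochastic matrix averages the coordinates of a vector, so at a coordinate where a fixed
vector attains its maximum, every coordinate carrying positive weight must equal that maximum.
Strong connectivity of the support spreads the maximum to every coordinate. Conversely, constant
vectors are fixed because the rows sum to one.
-/

open scoped BigOperators

noncomputable section

namespace Matrix

open Finset Relation

variable {ι : Type*} [Fintype ι] [DecidableEq ι] {W : Matrix ι ι ℝ} {x : ι → ℝ}

theorem mulVec_const_of_mem_rowStochastic (hW : W ∈ rowStochastic ℝ ι) (c : ℝ) :
    W *ᵥ (fun _ => c) = fun _ => c := by
  ext i
  simp only [mulVec, dotProduct, ← sum_mul, sum_row_of_mem_rowStochastic hW, one_mul]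

theorem eq_of_mulVec_eq_self_of_forall_le (hW : W ∈ rowStochastic ℝ ι) (hx : W *ᵥ x = x)
    {i j : ι} (hmax : ∀ k, x k ≤ x i) (hij : 0 < W i j) : x j = x i := by
  have hsum : ∑ k, W i k * (x i - x k) = 0 := by
    calc ∑ k, W i k * (x i - x k) = (∑ k, W i k) * x i - (W *ᵥ x) i := by
          simp only [mulVec, dotProduct, mul_sub, sum_sub_distrib, sum_mul]
      _ = 0 := by rw [sum_row_of_mem_rowStochastic hW, hx, one_mul, sub_self]
  have hterm := (sum_eq_zero_iff_of_nonneg fun k _ =>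
    mul_nonneg (nonneg_of_mem_rowStochastic hW) (sub_nonneg.2 (hmax k))).1 hsum j (mem_univ j)
  linarith [(mul_eq_zero.1 hterm).resolve_left hij.ne']

theorem eq_of_mulVec_eq_self_of_reflTransGen (hW : W ∈ rowStochastic ℝ ι) (hx : W *ᵥ x = x)
    {i j : ι} (hmax : ∀ k, x k ≤ x i) (hij : ReflTransGen (fun a b => 0 < W a b) i j) :
    x j = x i := by
  induction hij with
  | refl => rfl
  | tail _ hbc ih =>
    exact (eq_of_mulVec_eq_self_of_forall_le hW hx (fun k => ih ▸ hmax k) hbc).trans ih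

theorem mulVec_eq_self_iff_exists_const (hW : W ∈ rowStochastic ℝ ι)
    (hconn : ∀ i j, ReflTransGen (fun a b => 0 < W a b) i j) :
    W *ᵥ x = x ↔ ∃ c, ∀ i, x i = c := by
  constructor
  · intro hx
    cases isEmpty_or_nonempty ι
    · exact ⟨0, isEmptyElim⟩
    obtain ⟨i, hmax⟩ := Finite.exists_max x
    exact ⟨x i, fun j => eq_of_mulVec_eq_self_of_reflTransGen hW hx hmax (hconn i j)⟩
  · rintro ⟨c, hc⟩
    rw [funext hc]
    exact mulVec_const_of_mem_rowStochastic hW c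

end Matrix

theorem fixed_vectors_eq_consensus_general
    (N : ℕ)
    (W : Matrix (Fin N) (Fin N) ℝ) (hDS : DoublyStochastic W)
    (hconn : StronglyConnected {p : Fin N × Fin N | 0 < W p.1 p.2}) :
    ∀ x : Fin N → ℝ, W.mulVec x = x ↔ ∃ c : ℝ, ∀ i, x i = c := fun _ =>
  Matrix.mulVec_eq_self_iff_exists_const
    (Matrix.mem_rowStochastic_iff_sum.2 ⟨hDS.1, hDS.2.1⟩) hconn

/-- Perron–Frobenius: for a doubly stochastic matrix with positive diagonal and
strongly connected support, the fixed vectors of `x ↦ W x` are exactly the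
consensus (constant) vectors. -/
theorem fixed_vectors_eq_consensus
    (N : ℕ) (hN : 1 ≤ N)
    (W : Matrix (Fin N) (Fin N) ℝ) (hDS : DoublyStochastic W)
    (hdiag : ∀ i, 0 < W i i)
    (hconn : StronglyConnected {p : Fin N × Fin N | 0 < W p.1 p.2}) :
    ∀ x : Fin N → ℝ, W.mulVec x = x ↔ ∃ c : ℝ, ∀ i, x i = c :=
  fixed_vectors_eq_consensus_general N W hDS hconn
end
end

section
/- Let N ≥ 1 and Q ≥ 1, and let W₁, …, W_Q be N×N real matrices with all entries nonnegative and with strictly positive diagonal entries. Then for all indices i, j ∈ Fin N: if (W_l)_{ij} > 0 for some l ∈ {1, …, Q}, then the matrix product satisfies (W_Q ⬝ W_{Q−1} ⬝ ⋯ ⬝ W₁)_{ij} > 0. Consequently, if the union edge set ⋃_{l=1}^{Q} {(i,j) | (W_l)_{ij} > 0} is strongly connected on Fin N, then the edge set {(i,j) | (W_Q ⬝ ⋯ ⬝ W₁)_{ij} > 0} of the product is strongly connected. -/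
open scoped BigOperators

noncomputable section

/-!
A positive diagonal entry acts as a self-loop: for nonnegative matrices,
`(A * B) i j ≥ A i j * B j j` and `(A * B) i j ≥ A i i * B i j`. Since nonnegative matrices with
positive diagonal are closed under products, every edge of a factor survives in the product
`W_Q ⋯ W₁`, so its support contains the union of the supports and inherits strong connectivity.
-/

theorem StronglyConnected.mono {N : ℕ} {E F : Set (Fin N × Fin N)} (hEF : E ⊆ F)
    (hE : StronglyConnected E) : StronglyConnected F :=
  fun i j => Relation.ReflTransGen.mono (fun _ _ h => hEF h) i j (hE i j)

namespace Matrix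

variable {n R : Type*} [Fintype n] [Semiring R] [PartialOrder R] [IsStrictOrderedRing R]

theorem mul_apply_nonneg {A B : Matrix n n R} (hA : ∀ i j, 0 ≤ A i j)
    (hB : ∀ i j, 0 ≤ B i j) (i j : n) : 0 ≤ (A * B) i j :=
  Finset.sum_nonneg fun k _ => mul_nonneg (hA i k) (hB k j)

theorem mul_apply_pos {A B : Matrix n n R} (hA : ∀ i j, 0 ≤ A i j) (hB : ∀ i j, 0 ≤ B i j)
    {i k j : n} (hik : 0 < A i k) (hkj : 0 < B k j) : 0 < (A * B) i j :=
  Finset.sum_pos' (fun m _ => mul_nonneg (hA i m) (hB m j))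
    ⟨k, Finset.mem_univ k, mul_pos hik hkj⟩

variable [DecidableEq n]

variable (n R) in
def nonnegPosDiag : Submonoid (Matrix n n R) where
  carrier := {M | (∀ i j, 0 ≤ M i j) ∧ ∀ i, 0 < M i i}
  one_mem' := ⟨fun i j => by by_cases h : i = j <;> simp [one_apply, h], fun i => by simp⟩
  mul_mem' hA hB :=
    ⟨mul_apply_nonneg hA.1 hB.1, fun i => mul_apply_pos hA.1 hB.1 (hA.2 i) (hB.2 i)⟩

theorem mul_apply_pos_of_left {A B : Matrix n n R} (hA : A ∈ nonnegPosDiag n R)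
    (hB : B ∈ nonnegPosDiag n R) {i j : n} (hij : 0 < A i j) : 0 < (A * B) i j :=
  mul_apply_pos hA.1 hB.1 hij (hB.2 j)

theorem mul_apply_pos_of_right {A B : Matrix n n R} (hA : A ∈ nonnegPosDiag n R)
    (hB : B ∈ nonnegPosDiag n R) {i j : n} (hij : 0 < B i j) : 0 < (A * B) i j :=
  mul_apply_pos hA.1 hB.1 (hA.2 i) hij

theorem list_prod_apply_pos {L : List (Matrix n n R)} (hL : ∀ M ∈ L, M ∈ nonnegPosDiag n R)
    {M : Matrix n n R} (hM : M ∈ L) {i j : n} (hij : 0 < M i j) : 0 < L.prod i j := by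
  obtain ⟨s, t, rfl⟩ := List.append_of_mem hM
  have hs : s.prod ∈ nonnegPosDiag n R :=
    Submonoid.list_prod_mem _ fun x hx => hL x (by simp [hx])
  have ht : t.prod ∈ nonnegPosDiag n R :=
    Submonoid.list_prod_mem _ fun x hx => hL x (by simp [hx])
  have hM : M ∈ nonnegPosDiag n R := hL M (by simp)
  rw [List.prod_append, List.prod_cons]
  exact mul_apply_pos_of_right hs (mul_mem hM ht) (mul_apply_pos_of_left hM ht hij)

end Matrix

theorem product_support_strongly_connected_general
    (N Q : ℕ)
    (W : Fin Q → Matrix (Fin N) (Fin N) ℝ)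
    (hnn : ∀ l i j, 0 ≤ W l i j) (hdiag : ∀ l i, 0 < W l i i) :
    (∀ i j : Fin N, (∃ l : Fin Q, 0 < W l i j) →
      0 < ((List.ofFn fun r : Fin Q => W (Fin.rev r)).prod) i j) ∧
    (StronglyConnected {p : Fin N × Fin N | ∃ l : Fin Q, 0 < W l p.1 p.2} →
      StronglyConnected {p : Fin N × Fin N |
        0 < ((List.ofFn fun r : Fin Q => W (Fin.rev r)).prod) p.1 p.2}) := by
  have hmem : ∀ M ∈ List.ofFn fun r : Fin Q => W (Fin.rev r),
      M ∈ Matrix.nonnegPosDiag (Fin N) ℝ := by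
    rintro M hM
    obtain ⟨r, rfl⟩ := List.mem_ofFn.mp hM
    exact ⟨hnn _, hdiag _⟩
  have hsupp : ∀ i j : Fin N, (∃ l : Fin Q, 0 < W l i j) →
      0 < ((List.ofFn fun r : Fin Q => W (Fin.rev r)).prod) i j :=
    fun i j ⟨l, hl⟩ =>
      Matrix.list_prod_apply_pos hmem (List.mem_ofFn.mpr ⟨l.rev, by simp⟩) hl
  exact ⟨hsupp, StronglyConnected.mono fun p => hsupp p.1 p.2⟩

/-- For nonnegative matrices with strictly positive diagonals, positivity of an
entry of any factor propagates to the product `W_Q ⬝ ⋯ ⬝ W₁`; hence strong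
connectivity of the union of the supports implies strong connectivity of the
support of the product. -/
theorem product_support_strongly_connected
    (N Q : ℕ) (hN : 1 ≤ N) (hQ : 1 ≤ Q)
    (W : Fin Q → Matrix (Fin N) (Fin N) ℝ)
    (hnn : ∀ l i j, 0 ≤ W l i j) (hdiag : ∀ l i, 0 < W l i i) :
    (∀ i j : Fin N, (∃ l : Fin Q, 0 < W l i j) →
      0 < ((List.ofFn fun r : Fin Q => W (Fin.rev r)).prod) i j) ∧
    (StronglyConnected {p : Fin N × Fin N | ∃ l : Fin Q, 0 < W l p.1 p.2} →
      StronglyConnected {p : Fin N × Fin N |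
        0 < ((List.ofFn fun r : Fin Q => W (Fin.rev r)).prod) p.1 p.2}) :=
  product_support_strongly_connected_general N Q W hnn hdiag
end
end
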